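/- (Theorem 2, GO-MSE version.) Let (w_1, x_1), …, (w_M, x_M) be pairs of vectors in ℝ^K and define the K×K real symmetric matrix C = (1/M) ∑_{j=1}^{M} (x_j x_jᵀ w_j w_jᵀ + w_j w_jᵀ x_j x_jᵀ), with eigenvalues sorted decreasingly and corresponding orthonormal eigenvectors v_1, …, v_K. Fix L ≤ K and for an orthonormal family p_1, …, p_L write x̃_j = ∑_{i=1}^{L} ⟨p_i, x_j⟩ p_i and define the GO-MSE upper bound B(p) = 2·(1/M) ∑_j ‖w_j‖²‖x_j‖² − 2·(1/M) ∑_j ⟨w_j, x_j⟩⟨w_j, x̃_j⟩. Then B(p) = 2·(1/M) ∑_j ‖w_j‖²‖x_j‖² − ∑_{i=1}^{L} p_iᵀ C p_i, and B is minimized over all orthonormal families p_1, …, p_L of size L by taking p_i = v_i, the L principal eigenvectors of C. -/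

import Mathlib

open scoped RealInnerProductSpace
open Matrix

/-- The GO-MSE upper bound `B(p)` from Proposition 1, as an empirical average
over the `M` sample pairs `(w_j, x_j)`. -/
noncomputable def goBound (K L M : ℕ) (w x : Fin M → EuclideanSpace ℝ (Fin K))
    (p : Fin L → EuclideanSpace ℝ (Fin K)) : ℝ :=
  2 * ((M : ℝ)⁻¹ * ∑ j, ‖w j‖ ^ 2 * ‖x j‖ ^ 2)
    - 2 * ((M : ℝ)⁻¹ * ∑ j, ⟪w j, x j⟫ * ⟪w j, ∑ i, ⟪p i, x j⟫ • p i⟫)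

/-!
Expanding `⟪w, x̃⟫ = ∑ᵢ ⟪pᵢ, x⟫ ⟪w, pᵢ⟫` turns the cross term of the bound into
`∑ᵢ pᵢᵀ C pᵢ`, so minimising the bound means maximising this sum over orthonormal families.
In the eigenbasis it equals `∑ₖ λₖ sₖ` with weights `sₖ = ∑ᵢ ⟪vₖ, pᵢ⟫²`, which lie in `[0, 1]`
by Bessel's inequality and add up to `L` by Parseval's identity; a weighted sum of decreasing
`λₖ` with such weights is at most `λ₁ + ⋯ + λ_L`, the value attained by `pᵢ = vᵢ` (Ky Fan).
-/

open Finset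

theorem dotProduct_mulVec_vecMulVec_mul_vecMulVec {n R : Type*} [Fintype n] [CommSemiring R]
    (a b c d u z : n → R) :
    u ⬝ᵥ ((vecMulVec a b * vecMulVec c d) *ᵥ z) = (u ⬝ᵥ a) * (b ⬝ᵥ c) * (d ⬝ᵥ z) := by
  rw [vecMulVec_mul_vecMulVec, vecMulVec_mulVec, smul_dotProduct, dotProduct_smul]
  simp only [MulOpposite.smul_eq_mul_unop, MulOpposite.unop_op, smul_eq_mul]
  ring

theorem EuclideanSpace.dotProduct_ofLp {n : Type*} [Fintype n] (a b : EuclideanSpace ℝ n) :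
    a.ofLp ⬝ᵥ b.ofLp = ⟪a, b⟫ := by
  rw [EuclideanSpace.inner_eq_star_dotProduct, star_trivial, dotProduct_comm]

theorem EuclideanSpace.dotProduct_mulVec_eq_inner_toEuclideanLin {n : Type*} [Fintype n]
    [DecidableEq n] (A : Matrix n n ℝ) (u : EuclideanSpace ℝ n) :
    u ⬝ᵥ (A *ᵥ u) = ⟪u, toEuclideanLin A u⟫ := by
  rw [← EuclideanSpace.dotProduct_ofLp, Matrix.ofLp_toLpLin]
  rfl

theorem Finset.sum_mul_le_sum_of_sum_eq_card {ι : Type*} [Fintype ι]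
    {S : Finset ι} {lam s : ι → ℝ} (hs0 : ∀ i, 0 ≤ s i) (hs1 : ∀ i, s i ≤ 1)
    (hsum : ∑ i, s i = #S) (hsep : ∀ i ∈ S, ∀ j ∉ S, lam j ≤ lam i) :
    ∑ i, lam i * s i ≤ ∑ i ∈ S, lam i := by
  classical
  rcases S.eq_empty_or_nonempty with rfl | hS
  · have : ∀ i, s i = 0 := fun i =>
      (sum_eq_zero_iff_of_nonneg fun i _ => hs0 i).mp (by simpa using hsum) i (mem_univ i)
    simp [this]
  set t := S.inf' hS lam
  have hin : ∀ i ∈ S, t ≤ lam i := fun i hi => S.inf'_le lam hi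
  have hout : ∀ j ∉ S, lam j ≤ t := fun j hj =>
    (S.le_inf'_iff hS lam).mpr fun i hi => hsep i hi j hj
  have hA : 0 ≤ ∑ i ∈ S, (lam i - t) * (1 - s i) :=
    sum_nonneg fun i hi => mul_nonneg (by linarith [hin i hi]) (by linarith [hs1 i])
  have hB : 0 ≤ ∑ j ∈ Sᶜ, (t - lam j) * s j :=
    sum_nonneg fun j hj => mul_nonneg (by linarith [hout j (mem_compl.mp hj)]) (hs0 j)
  have key : ∑ i ∈ S, lam i - ∑ i, lam i * s i
      = ∑ i ∈ S, (lam i - t) * (1 - s i) + ∑ j ∈ Sᶜ, (t - lam j) * s j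
        + t * (#S - ∑ i, s i) := by
    rw [← sum_add_sum_compl S (fun i => lam i * s i), ← sum_add_sum_compl S s]
    simp only [sub_mul, mul_sub, mul_one, sum_sub_distrib, ← mul_sum, sum_const, nsmul_eq_mul]
    ring
  rw [hsum, sub_self, mul_zero, add_zero] at key
  linarith

namespace OrthonormalBasis

variable {ι E : Type*} [Fintype ι] [NormedAddCommGroup E] [InnerProductSpace ℝ E]
  (b : OrthonormalBasis ι ℝ E) {T : E →ₗ[ℝ] E} {lam : ι → ℝ}

theorem inner_map_self_eq_sum_of_eigen (hT : ∀ i, T (b i) = lam i • b i) (u : E) :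
    ⟪u, T u⟫ = ∑ i, lam i * ⟪b i, u⟫ ^ 2 := by
  have hTu : T u = ∑ i, (lam i * ⟪b i, u⟫) • b i := by
    conv_lhs => rw [← b.sum_repr' u]
    simp only [map_sum, map_smul, hT, smul_smul, mul_comm]
  simp only [hTu, inner_sum, real_inner_smul_right, real_inner_comm u, sq, mul_assoc]

theorem inner_map_self_basis_of_eigen (hT : ∀ i, T (b i) = lam i • b i) (i : ι) :
    ⟪b i, T (b i)⟫ = lam i := by
  rw [hT, real_inner_smul_right, real_inner_self_eq_norm_sq, b.orthonormal.1 i, one_pow, mul_one]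

theorem sum_inner_map_self_le_of_eigen (hT : ∀ i, T (b i) = lam i • b i)
    {κ : Type*} [Fintype κ] {p : κ → E} (hp : Orthonormal ℝ p) {S : Finset ι}
    (hS : #S = Fintype.card κ) (hsep : ∀ i ∈ S, ∀ j ∉ S, lam j ≤ lam i) :
    ∑ k, ⟪p k, T (p k)⟫ ≤ ∑ i ∈ S, lam i := by
  classical
  have hBessel (i : ι) : ∑ k, ⟪b i, p k⟫ ^ 2 ≤ 1 := by
    simpa [real_inner_comm, b.orthonormal.1 i] using hp.sum_inner_products_le (b i) (s := univ)
  have hParseval : ∑ i, ∑ k, ⟪b i, p k⟫ ^ 2 = #S := by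
    rw [sum_comm]
    simp [b.sum_sq_inner_right, hp.1 _, hS]
  calc ∑ k, ⟪p k, T (p k)⟫ = ∑ i, lam i * ∑ k, ⟪b i, p k⟫ ^ 2 := by
        simp only [b.inner_map_self_eq_sum_of_eigen hT, mul_sum]
        exact sum_comm
    _ ≤ ∑ i ∈ S, lam i :=
        sum_mul_le_sum_of_sum_eq_card (fun i => sum_nonneg fun k _ => sq_nonneg _) hBessel
          hParseval hsep

end OrthonormalBasis

noncomputable def goMatrix {K M : ℕ} (w x : Fin M → EuclideanSpace ℝ (Fin K)) :
    Matrix (Fin K) (Fin K) ℝ :=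
  (M : ℝ)⁻¹ • ∑ j, (vecMulVec (x j) (x j) * vecMulVec (w j) (w j)
    + vecMulVec (w j) (w j) * vecMulVec (x j) (x j))

section GOMSE

variable {K M : ℕ} (w x : Fin M → EuclideanSpace ℝ (Fin K))

theorem dotProduct_goMatrix_mulVec (u : EuclideanSpace ℝ (Fin K)) :
    u ⬝ᵥ (goMatrix w x *ᵥ u)
      = 2 * ((M : ℝ)⁻¹ * ∑ j, ⟪w j, x j⟫ * (⟪u, x j⟫ * ⟪u, w j⟫)) := by
  simp only [goMatrix, smul_mulVec, sum_mulVec, add_mulVec, dotProduct_smul, dotProduct_sum,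
    dotProduct_add, dotProduct_mulVec_vecMulVec_mul_vecMulVec, EuclideanSpace.dotProduct_ofLp,
    smul_eq_mul, mul_sum]
  refine sum_congr rfl fun j _ => ?_
  rw [real_inner_comm (w j) (x j), real_inner_comm u (w j), real_inner_comm u (x j)]
  ring

theorem goBound_eq_sub_sum_dotProduct_goMatrix_mulVec {L : ℕ}
    (p : Fin L → EuclideanSpace ℝ (Fin K)) :
    goBound K L M w x p = 2 * ((M : ℝ)⁻¹ * ∑ j, ‖w j‖ ^ 2 * ‖x j‖ ^ 2)
      - ∑ i, p i ⬝ᵥ (goMatrix w x *ᵥ p i) := by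
  simp only [goBound, dotProduct_goMatrix_mulVec, inner_sum, real_inner_smul_right, mul_sum]
  rw [sum_comm]
  congr 1
  exact sum_congr rfl fun i _ => sum_congr rfl fun j _ => by rw [real_inner_comm (w j) (p i)]

end GOMSE

theorem stmt_10 (K L M : ℕ) (hL : L ≤ K)
    (w x : Fin M → EuclideanSpace ℝ (Fin K))
    (C : Matrix (Fin K) (Fin K) ℝ)
    (hC : C = (M : ℝ)⁻¹ • ∑ j,
      (vecMulVec (x j) (x j) * vecMulVec (w j) (w j)
        + vecMulVec (w j) (w j) * vecMulVec (x j) (x j)))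
    (lam : Fin K → ℝ) (hsort : ∀ i j : Fin K, i ≤ j → lam j ≤ lam i)
    (v : Fin K → EuclideanSpace ℝ (Fin K)) (hv : Orthonormal ℝ v)
    (heig : ∀ i : Fin K, C *ᵥ (v i) = lam i • (v i)) :
    ∀ p : Fin L → EuclideanSpace ℝ (Fin K), Orthonormal ℝ p →
      (goBound K L M w x p
        = 2 * ((M : ℝ)⁻¹ * ∑ j, ‖w j‖ ^ 2 * ‖x j‖ ^ 2)
          - ∑ i : Fin L, (p i) ⬝ᵥ (C *ᵥ (p i))) ∧
      goBound K L M w x (fun i => v (Fin.castLE hL i)) ≤ goBound K L M w x p := by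
  obtain rfl : C = goMatrix w x := hC
  intro p hp
  refine ⟨goBound_eq_sub_sum_dotProduct_goMatrix_mulVec w x p, ?_⟩
  simp only [goBound_eq_sub_sum_dotProduct_goMatrix_mulVec, sub_le_sub_iff_left,
    EuclideanSpace.dotProduct_mulVec_eq_inner_toEuclideanLin]
  let b : OrthonormalBasis (Fin K) ℝ (EuclideanSpace ℝ (Fin K)) :=
    .mk hv (hv.linearIndependent.span_eq_top_of_card_eq_finrank' (by simp)).ge
  have hb : ⇑b = v := OrthonormalBasis.coe_mk hv _
  have hT (i : Fin K) : toEuclideanLin (goMatrix w x) (b i) = lam i • b i := by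
    rw [hb, toLpLin_apply, heig]
    rfl
  have hsep : ∀ i ∈ univ.map (Fin.castLEEmb hL), ∀ j ∉ univ.map (Fin.castLEEmb hL),
      lam j ≤ lam i := by
    simp only [mem_map, mem_univ, true_and, not_exists, Fin.castLEEmb_apply]
    rintro _ ⟨i, rfl⟩ j hj
    exact hsort _ _ (not_lt.mp fun hji => hj ⟨j, (Fin.lt_def.mp hji).trans i.isLt⟩ rfl)
  calc ∑ i, ⟪p i, toEuclideanLin (goMatrix w x) (p i)⟫
      ≤ ∑ k ∈ univ.map (Fin.castLEEmb hL), lam k :=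
        b.sum_inner_map_self_le_of_eigen hT hp (by simp) hsep
    _ = ∑ i, ⟪v (Fin.castLE hL i), toEuclideanLin (goMatrix w x) (v (Fin.castLE hL i))⟫ := by
        simp [← hb, b.inner_map_self_basis_of_eigen hT]
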